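/- arXiv:2407.03987 — 5 statements merged into one kernel-verified Lean document; each statement's English description precedes it below -/
import Mathlib

section
/- Suppose the daily conflict graph is the same graph G on each of the m days, and that the chromatic number of G equals its clique number (G is weakly perfect). Then a k-fair solution exists if and only if k·χ(G) ≤ m. -/
/-!
Counting the pairs (client of a maximum clique `K`, day it is scheduled) twice: every client of `K`
is scheduled on at least `k` days, while a day meets the clique in at most one client, so
`k * ω(G) ≤ m`. Conversely, splitting the first `k * χ(G)` days into `χ(G)` blocks of `k`
consecutive days and scheduling the `c`-th colour class of a proper colouring on every day of
the `c`-th block is `k`-fair.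
-/

open Finset

lemma le_card_filter_div_eq {m k c : ℕ} (h : k * (c + 1) ≤ m) :
    k ≤ #{i : Fin m | (i : ℕ) / k = c} := by
  rw [mul_add_one] at h
  calc k = #(univ : Finset (Fin k)) := by rw [card_univ, Fintype.card_fin]
    _ ≤ _ := card_le_card_of_injOn (fun t : Fin k => (⟨k * c + t, by omega⟩ : Fin m))
        (fun t _ => by
          have hk : 0 < k := t.pos
          simp [Nat.mul_add_div hk, Nat.div_eq_of_lt t.isLt])
        (fun s _ t _ hst => Fin.ext (by simpa using congrArg Fin.val hst))

namespace SimpleGraph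

variable {V : Type*} {G : SimpleGraph V}

lemma IsClique.card_inter_le_one_of_isIndepSet [DecidableEq V] {K s : Finset V}
    (hK : G.IsClique (K : Set V)) (hs : G.IsIndepSet (s : Set V)) : #(K ∩ s) ≤ 1 :=
  card_le_one.2 fun a ha b hb => by
    rw [mem_inter] at ha hb
    by_contra hab
    exact hs ha.2 hb.2 hab (hK ha.1 hb.1 hab)

lemma mul_card_le_card_of_isClique {ι : Type*} [Fintype ι] [DecidableEq V] {k : ℕ}
    {σ : ι → Finset V} (hσ : ∀ i, G.IsIndepSet (σ i : Set V)) {K : Finset V}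
    (hK : G.IsClique (K : Set V)) (hfair : ∀ j ∈ K, k ≤ #{i | j ∈ σ i}) :
    k * #K ≤ Fintype.card ι :=
  calc k * #K = ∑ _j ∈ K, k := by rw [sum_const, smul_eq_mul, mul_comm]
    _ ≤ ∑ j ∈ K, #{i | j ∈ σ i} := sum_le_sum hfair
    _ = ∑ i, #(K ∩ σ i) := by simp only [card_filter, ← filter_mem_eq_inter]; exact sum_comm
    _ ≤ ∑ _i : ι, 1 := sum_le_sum fun i _ => hK.card_inter_le_one_of_isIndepSet (hσ i)
    _ = Fintype.card ι := by rw [sum_const, smul_eq_mul, mul_one, card_univ]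

lemma Colorable.exists_fair_schedule [Fintype V] [DecidableEq V] {χ k m : ℕ}
    (hG : G.Colorable χ) (h : k * χ ≤ m) :
    ∃ σ : Fin m → Finset V, (∀ i, G.IsIndepSet (σ i : Set V)) ∧ ∀ j, k ≤ #{i | j ∈ σ i} := by
  obtain ⟨C⟩ := hG
  refine ⟨fun i => {j | (i : ℕ) / k = C j}, fun i a ha b hb hab hadj => ?_, fun j => ?_⟩
  · simp only [coe_filter, mem_univ, true_and, Set.mem_ofPred_eq] at ha hb
    exact C.valid hadj (Fin.ext (ha.symm.trans hb))
  · simp only [mem_filter, mem_univ, true_and]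
    exact le_card_filter_div_eq ((Nat.mul_le_mul_left k (C j).isLt).trans h)

end SimpleGraph

theorem weakly_perfect_k_fair_iff (n m k χ : ℕ) (G : SimpleGraph (Fin n))
    (hchrom : G.chromaticNumber = (χ : ℕ∞))
    (hclique : ∃ K : Finset (Fin n), G.IsNClique χ K) :
    (∃ σ : Fin m → Finset (Fin n),
      (∀ i, ∀ a ∈ σ i, ∀ b ∈ σ i, ¬ G.Adj a b) ∧
      (∀ j : Fin n, k ≤ (Finset.univ.filter (fun i => j ∈ σ i)).card)) ↔
    k * χ ≤ m := by
  constructor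
  · rintro ⟨σ, hindep, hfair⟩
    obtain ⟨K, hK⟩ := hclique
    simpa [hK.card_eq] using G.mul_card_le_card_of_isClique
      (fun i a ha b hb _ => hindep i a ha b hb) hK.isClique fun j _ => hfair j
  · intro hm
    have hcol : G.Colorable χ := by rw [← SimpleGraph.chromaticNumber_le_iff_colorable, hchrom]
    obtain ⟨σ, hindep, hfair⟩ := hcol.exists_fair_schedule hm
    exact ⟨σ, fun i a ha b hb hadj => hindep i ha hb (G.ne_of_adj hadj) hadj, hfair⟩
end

section
/- Let an instance with n clients and m days be given, and construct a new instance with clients {1,…,n+1} and m+1 days as follows: on each day i ≤ m the conflict graph is the original G_i together with client n+1 adjacent to all of 1,…,n; on day m+1 the conflict graph is the complete graph on {1,…,n+1}. Then the original instance admits a 1-fair solution if and only if the new instance admits a 1-fair solution. -/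
/-!
Schedule the original instance on the first `m` days and the new client alone on the complete
last day. Conversely, the complete last day schedules at most one client, and the new client,
being in conflict with everybody, is alone on whichever day it is scheduled; if that is one of
the first `m` days, the client of the last day can take its place there.
-/

open Finset

section Scheduling

variable {ι V : Type*}

def IsConflictFree (G : SimpleGraph V) (s : Finset V) : Prop :=
  ∀ a ∈ s, ∀ b ∈ s, ¬ G.Adj a b

def IsOneFair (G : ι → SimpleGraph V) (σ : ι → Finset V) : Prop :=
  (∀ i, IsConflictFree (G i) (σ i)) ∧ ∀ v, ∃ i, v ∈ σ i

theorem isConflictFree_of_subsingleton {G : SimpleGraph V} {s : Finset V}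
    (hs : (s : Set V).Subsingleton) : IsConflictFree G s :=
  fun a ha _ hb => hs ha hb ▸ G.loopless.irrefl a

theorem IsConflictFree.subsingleton_of_top {s : Finset V} (hs : IsConflictFree ⊤ s) :
    (s : Set V).Subsingleton :=
  fun a ha b hb => not_not.mp fun hab => hs a ha b hb hab

end Scheduling

namespace SimpleGraph

variable {n : ℕ}

def addBlockingClient (G : SimpleGraph (Fin n)) : SimpleGraph (Fin (n + 1)) :=
  SimpleGraph.fromRel fun (a b : Fin (n + 1)) =>
    (∃ (ha : (a : ℕ) < n) (hb : (b : ℕ) < n), G.Adj ⟨(a : ℕ), ha⟩ ⟨(b : ℕ), hb⟩) ∨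
      (a : ℕ) = n ∨ (b : ℕ) = n

variable {G : SimpleGraph (Fin n)}

@[simp]
theorem addBlockingClient_adj_castSucc {a b : Fin n} :
    G.addBlockingClient.Adj a.castSucc b.castSucc ↔ G.Adj a b := by
  simp only [addBlockingClient, fromRel_adj, ne_eq, Fin.castSucc_inj, Fin.val_castSucc, Fin.eta,
    a.isLt, b.isLt, exists_true_left, a.isLt.ne, b.isLt.ne, or_false]
  exact ⟨fun h => h.2.elim id fun h => h.symm, fun h => ⟨h.ne, Or.inl h⟩⟩

theorem addBlockingClient_adj_last (a : Fin n) :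
    G.addBlockingClient.Adj (Fin.last n) a.castSucc := by
  simp [addBlockingClient, (Fin.castSucc_ne_last a).symm]

end SimpleGraph

open SimpleGraph

variable {n m : ℕ}

noncomputable def castSuccPreimage (s : Finset (Fin (n + 1))) : Finset (Fin n) :=
  s.preimage Fin.castSucc (Fin.castSucc_injective n).injOn

@[simp]
theorem mem_castSuccPreimage {s : Finset (Fin (n + 1))} {a : Fin n} :
    a ∈ castSuccPreimage s ↔ a.castSucc ∈ s :=
  mem_preimage

theorem IsConflictFree.map_castSucc {G : SimpleGraph (Fin n)} {s : Finset (Fin n)}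
    (hs : IsConflictFree G s) : IsConflictFree G.addBlockingClient (s.map Fin.castSuccEmb) := by
  simp only [IsConflictFree, mem_map, Fin.coe_castSuccEmb, forall_exists_index, and_imp,
    forall_apply_eq_imp_iff₂, addBlockingClient_adj_castSucc]
  exact hs

theorem IsConflictFree.castSuccPreimage {G : SimpleGraph (Fin n)} {s : Finset (Fin (n + 1))}
    (hs : IsConflictFree G.addBlockingClient s) : IsConflictFree G (castSuccPreimage s) :=
  fun _ ha _ hb hab =>
    hs _ (mem_castSuccPreimage.mp ha) _ (mem_castSuccPreimage.mp hb)
      (addBlockingClient_adj_castSucc.mpr hab)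

theorem IsConflictFree.castSucc_notMem {G : SimpleGraph (Fin n)} {s : Finset (Fin (n + 1))}
    (hs : IsConflictFree G.addBlockingClient s) (hlast : Fin.last n ∈ s) (a : Fin n) :
    a.castSucc ∉ s :=
  fun ha => hs _ hlast _ ha (addBlockingClient_adj_last a)

theorem subsingleton_castSuccPreimage {s : Finset (Fin (n + 1))}
    (hs : (s : Set (Fin (n + 1))).Subsingleton) :
    (castSuccPreimage s : Set (Fin n)).Subsingleton := by
  rw [castSuccPreimage, coe_preimage]
  exact hs.preimage (Fin.castSucc_injective n)

section BlockingInstance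

def addBlockingDay (σ : Fin m → Finset (Fin n)) : Fin (m + 1) → Finset (Fin (n + 1)) :=
  Fin.lastCases {Fin.last n} fun k => (σ k).map Fin.castSuccEmb

noncomputable def removeBlockingDay (σ' : Fin (m + 1) → Finset (Fin (n + 1))) (k : Fin m) :
    Finset (Fin n) :=
  if Fin.last n ∈ σ' k.castSucc then castSuccPreimage (σ' (Fin.last m))
  else castSuccPreimage (σ' k.castSucc)

variable {G : Fin m → SimpleGraph (Fin n)} {H : Fin (m + 1) → SimpleGraph (Fin (n + 1))}

theorem isOneFair_addBlockingDay (hH : ∀ k, H k.castSucc = (G k).addBlockingClient)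
    {σ : Fin m → Finset (Fin n)} (hσ : IsOneFair G σ) :
    IsOneFair H (addBlockingDay σ) := by
  obtain ⟨hfree, hcover⟩ := hσ
  constructor
  · intro i
    induction i using Fin.lastCases with
    | last =>
      rw [addBlockingDay, Fin.lastCases_last]
      exact isConflictFree_of_subsingleton (by simp)
    | cast k => simpa [addBlockingDay, hH] using (hfree k).map_castSucc
  · intro j
    induction j using Fin.lastCases with
    | last => exact ⟨Fin.last m, by simp [addBlockingDay]⟩
    | cast a =>
      obtain ⟨k, hk⟩ := hcover a
      exact ⟨k.castSucc, by simpa [addBlockingDay] using hk⟩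

theorem isOneFair_removeBlockingDay (hH : ∀ k, H k.castSucc = (G k).addBlockingClient)
    (hlast : H (Fin.last m) = ⊤) {σ' : Fin (m + 1) → Finset (Fin (n + 1))}
    (hσ' : IsOneFair H σ') :
    IsOneFair G (removeBlockingDay σ') := by
  obtain ⟨hfree, hcover⟩ := hσ'
  have hfree_cast k : IsConflictFree (G k).addBlockingClient (σ' k.castSucc) := hH k ▸ hfree _
  have hlast_subsingleton : (σ' (Fin.last m) : Set (Fin (n + 1))).Subsingleton :=
    (hlast ▸ hfree (Fin.last m)).subsingleton_of_top
  constructor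
  · intro k
    rw [removeBlockingDay]
    split_ifs
    · exact isConflictFree_of_subsingleton (subsingleton_castSuccPreimage hlast_subsingleton)
    · exact (hfree_cast k).castSuccPreimage
  · intro a
    obtain ⟨i, hi⟩ := hcover a.castSucc
    induction i using Fin.lastCases with
    | cast k =>
      refine ⟨k, ?_⟩
      have hlast_notMem : Fin.last n ∉ σ' k.castSucc :=
        fun h => (hfree_cast k).castSucc_notMem h a hi
      rwa [removeBlockingDay, if_neg hlast_notMem, mem_castSuccPreimage]
    | last =>
      obtain ⟨i', hi'⟩ := hcover (Fin.last n)
      induction i' using Fin.lastCases with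
      | last => exact absurd (hlast_subsingleton hi hi') (Fin.castSucc_ne_last a)
      | cast k =>
        refine ⟨k, ?_⟩
        rwa [removeBlockingDay, if_pos hi', mem_castSuccPreimage]

end BlockingInstance

theorem add_blocking_client_and_day (n m : ℕ) (G : Fin m → SimpleGraph (Fin n))
    (H : Fin (m + 1) → SimpleGraph (Fin (n + 1)))
    (hH : ∀ i : Fin (m + 1), H i =
      if h : (i : ℕ) < m then
        SimpleGraph.fromRel (fun (a b : Fin (n + 1)) =>
          (∃ (ha : (a : ℕ) < n) (hb : (b : ℕ) < n),
            (G ⟨(i : ℕ), h⟩).Adj ⟨(a : ℕ), ha⟩ ⟨(b : ℕ), hb⟩) ∨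
          (a : ℕ) = n ∨ (b : ℕ) = n)
      else ⊤) :
    (∃ σ : Fin m → Finset (Fin n),
      (∀ i, ∀ a ∈ σ i, ∀ b ∈ σ i, ¬ (G i).Adj a b) ∧
      (∀ j : Fin n, ∃ i, j ∈ σ i)) ↔
    (∃ σ' : Fin (m + 1) → Finset (Fin (n + 1)),
      (∀ i, ∀ a ∈ σ' i, ∀ b ∈ σ' i, ¬ (H i).Adj a b) ∧
      (∀ j : Fin (n + 1), ∃ i, j ∈ σ' i)) := by
  have hcast (k : Fin m) : H k.castSucc = (G k).addBlockingClient := by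
    rw [hH, dif_pos (by simp)]
    rfl
  have hlast : H (Fin.last m) = ⊤ := by
    rw [hH, dif_neg (by simp)]
  exact ⟨fun ⟨σ, hσ⟩ => ⟨_, isOneFair_addBlockingDay hcast hσ⟩,
    fun ⟨σ', hσ'⟩ => ⟨_, isOneFair_removeBlockingDay hcast hlast hσ'⟩⟩
end

section
/- For k = m−1, the instance admits a (m−1)-fair solution if and only if the associated 2-CNF formula is satisfiable, where the formula has a variable x_{i,j} for each day i and client j, a clause (¬x_{i,j1} ∨ ¬x_{i,j2}) for each pair of clients j1, j2 conflicting on day i, and a clause (x_{i1,j} ∨ x_{i2,j}) for each client j and each pair of distinct days i1 < i2. -/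
theorem km1_fair_iff_twosat (n m : ℕ) (G : Fin m → SimpleGraph (Fin n)) :
    (∃ σ : Fin m → Finset (Fin n),
      (∀ i, ∀ a ∈ σ i, ∀ b ∈ σ i, ¬ (G i).Adj a b) ∧
      (∀ j : Fin n, m - 1 ≤ (Finset.univ.filter (fun i => j ∈ σ i)).card)) ↔
    (∃ x : Fin m → Fin n → Bool,
      (∀ (i : Fin m) (j1 j2 : Fin n), (G i).Adj j1 j2 →
        ¬ (x i j1 = true ∧ x i j2 = true)) ∧
      (∀ (j : Fin n) (i1 i2 : Fin m), i1 < i2 → (x i1 j = true ∨ x i2 j = true))) := by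
  constructor
  · rintro ⟨σ, hind, hfair⟩
    refine ⟨fun i j => decide (j ∈ σ i), ?_, ?_⟩
    · intro i j1 j2 hadj ⟨h1, h2⟩
      exact hind i j1 (by simpa using h1) j2 (by simpa using h2) hadj
    · intro j i1 i2 hlt
      by_contra h
      push_neg at h
      obtain ⟨h1, h2⟩ := h
      replace h1 : j ∉ σ i1 := by simpa using h1
      replace h2 : j ∉ σ i2 := by simpa using h2
      have hsum := Finset.card_filter_add_card_filter_not
        (s := (Finset.univ : Finset (Fin m))) (p := fun i => j ∈ σ i)
      simp only [Finset.card_univ, Fintype.card_fin] at hsum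
      have hsub : ({i1, i2} : Finset (Fin m)) ⊆
          Finset.univ.filter (fun i => ¬ j ∈ σ i) := by
        intro i hi
        simp only [Finset.mem_insert, Finset.mem_singleton] at hi
        rcases hi with rfl | rfl <;> simp [h1, h2]
      have hc2 : 2 ≤ (Finset.univ.filter (fun i => ¬ j ∈ σ i)).card := by
        have := Finset.card_le_card hsub
        rwa [Finset.card_insert_of_notMem (by simp [hlt.ne]),
          Finset.card_singleton] at this
      have hf := hfair j
      have hm : 2 ≤ m := by
        have h' : (i1 : ℕ) < (i2 : ℕ) := hlt
        have := i2.isLt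
        omega
      omega
  · rintro ⟨x, hcl, hday⟩
    refine ⟨fun i => Finset.univ.filter (fun j => x i j = true), ?_, ?_⟩
    · intro i a ha b hb hadj
      simp only [Finset.mem_filter, Finset.mem_univ, true_and] at ha hb
      exact hcl i a b hadj ⟨ha, hb⟩
    · intro j
      have hsum := Finset.card_filter_add_card_filter_not
        (s := (Finset.univ : Finset (Fin m)))
        (p := fun i => j ∈ Finset.univ.filter (fun j => x i j = true))
      simp only [Finset.card_univ, Fintype.card_fin] at hsum
      have hc1 : (Finset.univ.filter
          (fun i => ¬ j ∈ Finset.univ.filter (fun j' => x i j' = true))).card ≤ 1 := by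
        apply Finset.card_le_one.mpr
        intro a ha b hb
        simp only [Finset.mem_filter, Finset.mem_univ, true_and] at ha hb
        by_contra hne
        rcases lt_or_gt_of_ne hne with h | h
        · rcases hday j a b h with hx | hx <;> [exact ha hx; exact hb hx]
        · rcases hday j b a h with hx | hx <;> [exact hb hx; exact ha hx]
      simp only [Finset.mem_filter, Finset.mem_univ, true_and] at hsum hc1 ⊢
      omega
end

section
/- For unit processing times, a k-fair solution exists if and only if the following bipartite graph has a matching saturating all job vertices: one side has a vertex v_{i,j} for each day i and client j; the other side has a vertex u_{i,d} for each day i and each due date d occurring on day i, plus m−k rejection vertices w_{1,j},…,w_{m−k,j} per client j; v_{i,j} is adjacent to u_{i,d_{i,j}} and to all of w_{1,j},…,w_{m−k,j}. -/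
/-!
A job scheduled on day `i` is matched to `u_{i,d_{i,j}}`, and injectivity at these vertices is
exactly the distinct-due-date condition. A job left out is matched to one of its client's `m - k`
rejection vertices, so a matching exists iff every client is rejected on at most `m - k` days,
i.e. scheduled on at least `k`.
-/

open Finset Function

theorem Finset.le_card_filter_iff_card_filter_not_le {α : Type*} {s : Finset α} (p : α → Prop)
    [DecidablePred p] {k : ℕ} (hk : k ≤ #s) :
    k ≤ #(s.filter p) ↔ #(s.filter (¬ p ·)) ≤ #s - k := by
  have := card_filter_add_card_filter_not (s := s) p
  omega

variable {α β γ : Type*}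

/-- `Sum.inl (i, t)` is the vertex `u_{i,t}` and `Sum.inr (ℓ, j)` the rejection vertex `w_{ℓ,j}`. -/
structure IsJobMatching (d : α → β → γ) (r : ℕ) (M : α × β → (α × γ) ⊕ (Fin r × β)) : Prop where
  injective : Injective M
  inl_eq : ∀ i j i' t, M (i, j) = Sum.inl (i', t) → i' = i ∧ t = d i j
  inr_eq : ∀ i j ℓ j', M (i, j) = Sum.inr (ℓ, j') → j' = j

namespace IsJobMatching

variable {d : α → β → γ} {r : ℕ} {M : α × β → (α × γ) ⊕ (Fin r × β)}

theorem eq_inl_of_isLeft (hM : IsJobMatching d r M) {i : α} {j : β} (h : (M (i, j)).isLeft) :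
    M (i, j) = Sum.inl (i, d i j) := by
  obtain ⟨⟨i', t⟩, hit⟩ := Sum.isLeft_iff.mp h
  obtain ⟨rfl, rfl⟩ := hM.inl_eq i j i' t hit
  exact hit

theorem injOn_isLeft (hM : IsJobMatching d r M) (i : α) :
    Set.InjOn (d i) {j | (M (i, j)).isLeft} := by
  intro j₁ h₁ j₂ h₂ hd
  have hM₁₂ : M (i, j₁) = M (i, j₂) := by
    rw [hM.eq_inl_of_isLeft h₁, hM.eq_inl_of_isLeft h₂, hd]
  exact congrArg Prod.snd (hM.injective hM₁₂)

theorem card_filter_not_isLeft_le [Fintype α] (hM : IsJobMatching d r M) (j : β) :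
    #{i | ¬(M (i, j)).isLeft} ≤ r := by
  have hmaps : Set.MapsTo (fun i => M (i, j)) ↑(univ.filter fun i => ¬(M (i, j)).isLeft)
      ↑(univ.map ((Embedding.sectL (Fin r) j).trans (Embedding.inr (α := α × γ)))) := by
    intro i hi
    obtain ⟨⟨ℓ, j'⟩, hℓ⟩ := Sum.isRight_iff.mp (Sum.not_isLeft.mp (mem_filter.mp hi).2)
    obtain rfl := hM.inr_eq i j ℓ j' hℓ
    simp [hℓ]
  have hinj : Set.InjOn (fun i => M (i, j)) ↑(univ.filter fun i => ¬(M (i, j)).isLeft) :=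
    fun _ _ _ _ h => congrArg Prod.fst (hM.injective h)
  simpa using card_le_card_of_injOn _ hmaps hinj

end IsJobMatching

theorem exists_isJobMatching [Fintype α] [DecidableEq β] {d : α → β → γ} {r : ℕ}
    (σ : α → Finset β) (hσ : ∀ i, Set.InjOn (d i) (σ i)) (hrej : ∀ j, #{i | j ∉ σ i} ≤ r) :
    ∃ M, IsJobMatching d r M := by
  have hslot (j : β) : Nonempty ({i // j ∉ σ i} ↪ Fin r) :=
    Embedding.nonempty_of_card_le (by simpa [Fintype.card_subtype] using hrej j)
  let slot j := (hslot j).some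
  let M : α × β → (α × γ) ⊕ (Fin r × β) := fun p =>
    if h : p.2 ∈ σ p.1 then .inl (p.1, d p.1 p.2) else .inr (slot p.2 ⟨p.1, h⟩, p.2)
  refine ⟨M, ⟨?_, ?_, ?_⟩⟩
  · rintro ⟨i₁, j₁⟩ ⟨i₂, j₂⟩ h
    simp only [M] at h
    split_ifs at h with h₁ h₂ h₂
    · obtain ⟨rfl, hd⟩ := Prod.mk.inj (Sum.inl.inj h)
      rw [hσ i₁ h₁ h₂ hd]
    · obtain ⟨hℓ, rfl⟩ := Prod.mk.inj (Sum.inr.inj h)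
      obtain rfl : i₁ = i₂ := congrArg Subtype.val ((slot j₁).injective hℓ)
      rfl
  · intro i j i' t h
    simp only [M] at h
    split_ifs at h
    · obtain ⟨rfl, rfl⟩ := Prod.mk.inj (Sum.inl.inj h)
      exact ⟨rfl, rfl⟩
  · intro i j ℓ j' h
    simp only [M] at h
    split_ifs at h
    · exact (Prod.mk.inj (Sum.inr.inj h)).2.symm

theorem unit_jobs_k_fair_iff_matching_general (n m k : ℕ) (hk : k ≤ m)
    (d : Fin m → Fin n → ℕ) :
    (∃ σ : Fin m → Finset (Fin n),
      (∀ i, ∀ j1 ∈ σ i, ∀ j2 ∈ σ i, j1 ≠ j2 → d i j1 ≠ d i j2) ∧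
      (∀ j : Fin n, k ≤ (Finset.univ.filter (fun i => j ∈ σ i)).card)) ↔
    (∃ M : Fin m × Fin n → (Fin m × ℕ) ⊕ (Fin (m - k) × Fin n),
      Function.Injective M ∧
      (∀ (i : Fin m) (j : Fin n) (i' : Fin m) (d' : ℕ),
        M (i, j) = Sum.inl (i', d') → i' = i ∧ d' = d i j) ∧
      (∀ (i : Fin m) (j : Fin n) (ℓ : Fin (m - k)) (j' : Fin n),
        M (i, j) = Sum.inr (ℓ, j') → j' = j)) := by
  have hk' : k ≤ #(univ : Finset (Fin m)) := by simpa using hk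
  constructor
  · rintro ⟨σ, hdistinct, hfair⟩
    obtain ⟨M, hM⟩ := exists_isJobMatching (r := m - k) σ
      (fun i _ h₁ _ h₂ hd => by_contra fun hne => hdistinct i _ h₁ _ h₂ hne hd)
      (fun j => by simpa using (le_card_filter_iff_card_filter_not_le _ hk').mp (hfair j))
    exact ⟨M, hM.injective, hM.inl_eq, hM.inr_eq⟩
  · rintro ⟨M, hinj, hinl, hinr⟩
    have hM : IsJobMatching d (m - k) M := ⟨hinj, hinl, hinr⟩
    refine ⟨fun i => {j | (M (i, j)).isLeft}, fun i j₁ h₁ j₂ h₂ hne hd => ?_, fun j => ?_⟩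
    · exact hne (hM.injOn_isLeft i (by simpa using h₁) (by simpa using h₂) hd)
    · simpa [le_card_filter_iff_card_filter_not_le _ hk'] using hM.card_filter_not_isLeft_le j

theorem unit_jobs_k_fair_iff_matching (n m k : ℕ) (hk : k ≤ m)
    (d : Fin m → Fin n → ℕ) (hd : ∀ i j, 1 ≤ d i j) :
    (∃ σ : Fin m → Finset (Fin n),
      (∀ i, ∀ j1 ∈ σ i, ∀ j2 ∈ σ i, j1 ≠ j2 → d i j1 ≠ d i j2) ∧
      (∀ j : Fin n, k ≤ (Finset.univ.filter (fun i => j ∈ σ i)).card)) ↔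
    (∃ M : Fin m × Fin n → (Fin m × ℕ) ⊕ (Fin (m - k) × Fin n),
      Function.Injective M ∧
      (∀ (i : Fin m) (j : Fin n) (i' : Fin m) (d' : ℕ),
        M (i, j) = Sum.inl (i', d') → i' = i ∧ d' = d i j) ∧
      (∀ (i : Fin m) (j : Fin n) (ℓ : Fin (m - k)) (j' : Fin n),
        M (i, j) = Sum.inr (ℓ, j') → j' = j)) :=
  unit_jobs_k_fair_iff_matching_general n m k hk d
end

section
/- The per-client fairness version reduces to the uniform version: given an instance with m days where each client j has its own fairness requirement k_j ≤ m, construct a new instance with m additional days and two new clients c⁺, c⁻ that conflict with each other on every day of the 2m days; on the first m days neither new client conflicts with any original client; on additional day m+ℓ (for ℓ ∈ {1,…,m}), original client j conflicts with both c⁺ and c⁻ iff ℓ ≤ k_j, and no two original clients conflict. Then the original instance has a solution scheduling each client j on at least k_j days if and only if the new instance has an m-fair solution (every client scheduled on at least m of the 2m days). -/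
/-!
Forward: keep the old schedule on the first `m` days and add `c⁺` to each of them; on extra day
`ℓ` schedule `c⁻` together with every client `j` with `k j ≤ ℓ`. This serves `j` on `m - k j`
extra days, which tops its `k j` old days up to `m`.

Backward: `c⁺` and `c⁻` conflict on every one of the `2m` days and each needs `m` of them, so
every day serves exactly one of them. On an extra day `ℓ < k j` client `j` conflicts with both,
so `j` gets at most `m - k j` extra days and hence at least `k j` of the original ones.
-/

open Finset

namespace FairSchedule

variable {D V : Type*}

def IsSchedule (G : D → SimpleGraph V) (σ : D → Finset V) : Prop :=
  ∀ d, ∀ a ∈ σ d, ∀ b ∈ σ d, ¬ (G d).Adj a b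

def daysServed [Fintype D] [DecidableEq V] (σ : D → Finset V) (v : V) : ℕ :=
  #{d | v ∈ σ d}

lemma card_filter_sum {α β : Type*} [Fintype α] [Fintype β] (p : α ⊕ β → Prop)
    [DecidablePred p] : #{x | p x} = #{a | p (.inl a)} + #{b | p (.inr b)} := by
  rw [← card_toLeft_add_card_toRight]
  congr 2 <;> ext <;> simp

lemma daysServed_sum {D₁ D₂ : Type*} [Fintype D₁] [Fintype D₂] [DecidableEq V]
    (σ : D₁ ⊕ D₂ → Finset V) (v : V) :
    daysServed σ v = daysServed (σ ∘ .inl) v + daysServed (σ ∘ .inr) v :=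
  card_filter_sum _

lemma card_filter_le_val (m k : ℕ) : #{ℓ : Fin m | k ≤ (ℓ : ℕ)} = m - k := by
  have h := card_filter_add_card_filter_not (s := (univ : Finset (Fin m)))
    (fun ℓ => (ℓ : ℕ) < k)
  simp only [not_lt, card_univ, Fintype.card_fin, Fin.card_filter_val_lt] at h
  omega

lemma forall_or_of_card_le_add {α : Type*} [Fintype α] {p q : α → Prop} [DecidablePred p]
    [DecidablePred q] (hpq : ∀ a, p a → ¬ q a)
    (hcard : Fintype.card α ≤ #{a | p a} + #{a | q a}) (a : α) : p a ∨ q a := by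
  classical
  have hdisj : Disjoint (univ.filter p) (univ.filter q) := disjoint_filter.2 fun a _ => hpq a
  have huniv : univ.filter (fun a => p a ∨ q a) = univ := by
    refine eq_univ_of_card _ (le_antisymm (card_le_univ _) ?_)
    rwa [filter_or, card_union_of_disjoint hdisj]
  simpa using eq_univ_iff_forall.1 huniv a

open Sum

/- The new clients are `c⁺ = inr true` and `c⁻ = inr false`. Extra day `ℓ : Fin m` is day
`m + ℓ + 1` of the paper, so its condition `ℓ + 1 ≤ k j` reads `ℓ < k j`. -/

def originalDay (G : SimpleGraph V) : SimpleGraph (V ⊕ Bool) :=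
  SimpleGraph.fromRel fun a b =>
    (∃ a' b', a = inl a' ∧ b = inl b' ∧ G.Adj a' b') ∨ (a = inr true ∧ b = inr false)

def extraDay (k : V → ℕ) (ℓ : ℕ) : SimpleGraph (V ⊕ Bool) :=
  SimpleGraph.fromRel fun a b =>
    (a = inr true ∧ b = inr false) ∨ (∃ j, a = inl j ∧ (∃ c : Bool, b = inr c) ∧ ℓ < k j)

def uniformInstance {m : ℕ} (k : V → ℕ) (G : Fin m → SimpleGraph V) :
    Fin m ⊕ Fin m → SimpleGraph (V ⊕ Bool) :=
  Sum.elim (fun i => originalDay (G i)) (fun ℓ => extraDay k ℓ)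

section Adjacency

variable (G : SimpleGraph V) (k : V → ℕ) (ℓ : ℕ) (a b : V) (c d : Bool)

@[simp] lemma originalDay_adj_inl_inl : (originalDay G).Adj (inl a) (inl b) ↔ G.Adj a b := by
  simpa [originalDay, G.adj_comm b a] using SimpleGraph.Adj.ne

@[simp] lemma originalDay_adj_inl_inr : ¬ (originalDay G).Adj (inl a) (inr c) := by
  simp [originalDay]

@[simp] lemma originalDay_adj_inr_inl : ¬ (originalDay G).Adj (inr c) (inl a) := by
  simp [originalDay]

@[simp] lemma originalDay_adj_inr_inr : (originalDay G).Adj (inr c) (inr d) ↔ c ≠ d := by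
  cases c <;> cases d <;> simp [originalDay]

@[simp] lemma extraDay_adj_inl_inl : ¬ (extraDay k ℓ).Adj (inl a) (inl b) := by
  simp [extraDay]

@[simp] lemma extraDay_adj_inl_inr : (extraDay k ℓ).Adj (inl a) (inr c) ↔ ℓ < k a := by
  simp [extraDay]

@[simp] lemma extraDay_adj_inr_inl : (extraDay k ℓ).Adj (inr c) (inl a) ↔ ℓ < k a := by
  simp [extraDay]

@[simp] lemma extraDay_adj_inr_inr : (extraDay k ℓ).Adj (inr c) (inr d) ↔ c ≠ d := by
  cases c <;> cases d <;> simp [extraDay]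

end Adjacency

variable {m : ℕ} {k : V → ℕ} {G : Fin m → SimpleGraph V}

section Extension

variable [Fintype V]

def extendSchedule (k : V → ℕ) (σ : Fin m → Finset V) : Fin m ⊕ Fin m → Finset (V ⊕ Bool) :=
  Sum.elim (fun i => (σ i).disjSum {true}) (fun ℓ => ({j | k j ≤ ℓ} : Finset V).disjSum {false})

lemma isSchedule_extendSchedule {σ : Fin m → Finset V} (hσ : IsSchedule G σ) :
    IsSchedule (uniformInstance k G) (extendSchedule k σ) := by
  rintro (i | ℓ) (a | a) ha (b | b) hb <;> simp_all [extendSchedule, uniformInstance]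
  exact hσ i a ha b hb

lemma daysServed_extendSchedule_inl [DecidableEq V] (σ : Fin m → Finset V) (j : V) :
    daysServed (extendSchedule k σ) (inl j) = daysServed σ j + (m - k j) := by
  rw [daysServed_sum, ← card_filter_le_val]
  simp [daysServed, extendSchedule]

lemma daysServed_extendSchedule_inr [DecidableEq V] (σ : Fin m → Finset V) (c : Bool) :
    daysServed (extendSchedule k σ) (inr c) = m := by
  rw [daysServed_sum]
  cases c <;> simp [daysServed, extendSchedule]

lemma exists_uniform_schedule [DecidableEq V]
    (h : ∃ σ, IsSchedule G σ ∧ ∀ j, k j ≤ daysServed σ j) :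
    ∃ σ', IsSchedule (uniformInstance k G) σ' ∧ ∀ c, m ≤ daysServed σ' c := by
  obtain ⟨σ, hσ, hserved⟩ := h
  refine ⟨extendSchedule k σ, isSchedule_extendSchedule hσ, ?_⟩
  rintro (j | c)
  · rw [daysServed_extendSchedule_inl]
    have := hserved j
    omega
  · rw [daysServed_extendSchedule_inr]

end Extension

section Restriction

variable {σ' : Fin m ⊕ Fin m → Finset (V ⊕ Bool)}

lemma isSchedule_toLeft (hσ' : IsSchedule (uniformInstance k G) σ') :
    IsSchedule G fun i => (σ' (inl i)).toLeft := by
  intro i a ha b hb hab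
  simp only [mem_toLeft] at ha hb
  exact hσ' (inl i) _ ha _ hb (by simpa [uniformInstance] using hab)

variable [DecidableEq V]

lemma daysServed_toLeft (j : V) :
    daysServed (fun i => (σ' (inl i)).toLeft) j = daysServed (σ' ∘ inl) (inl j) := by
  simp [daysServed]

lemma inr_true_mem_or_inr_false_mem (hσ' : IsSchedule (uniformInstance k G) σ')
    (hserved : ∀ c, m ≤ daysServed σ' c) (d : Fin m ⊕ Fin m) :
    inr true ∈ σ' d ∨ inr false ∈ σ' d := by
  refine forall_or_of_card_le_add (fun d ht hf => hσ' d _ ht _ hf ?_) ?_ d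
  · cases d <;> simp [uniformInstance]
  · simp only [Fintype.card_sum, Fintype.card_fin]
    exact add_le_add (hserved (inr true)) (hserved (inr false))

lemma le_of_inl_mem_extraDay (hσ' : IsSchedule (uniformInstance k G) σ')
    (hserved : ∀ c, m ≤ daysServed σ' c) {j : V} {ℓ : Fin m} (hj : inl j ∈ σ' (inr ℓ)) :
    k j ≤ ℓ := by
  by_contra! hlt
  rcases inr_true_mem_or_inr_false_mem hσ' hserved (inr ℓ) with hc | hc <;>
    exact hσ' (inr ℓ) _ hj _ hc (by simpa [uniformInstance] using hlt)

lemma daysServed_inr_le (hσ' : IsSchedule (uniformInstance k G) σ')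
    (hserved : ∀ c, m ≤ daysServed σ' c) (j : V) :
    daysServed (σ' ∘ inr) (inl j) ≤ m - k j := by
  rw [← card_filter_le_val]
  exact card_le_card fun ℓ hℓ => by
    simpa using le_of_inl_mem_extraDay hσ' hserved (mem_filter.1 hℓ).2

end Restriction

lemma exists_schedule_of_uniform [DecidableEq V] (hkm : ∀ j, k j ≤ m)
    (h : ∃ σ', IsSchedule (uniformInstance k G) σ' ∧ ∀ c, m ≤ daysServed σ' c) :
    ∃ σ, IsSchedule G σ ∧ ∀ j, k j ≤ daysServed σ j := by
  obtain ⟨σ', hσ', hserved⟩ := h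
  refine ⟨_, isSchedule_toLeft hσ', fun j => ?_⟩
  have htotal := hserved (inl j)
  have hextra := daysServed_inr_le hσ' hserved j
  rw [daysServed_sum] at htotal
  rw [daysServed_toLeft]
  have := hkm j
  omega

end FairSchedule

theorem per_client_fairness_reduces_to_uniform (n m : ℕ) (k : Fin n → ℕ)
    (hkm : ∀ j, k j ≤ m) (G : Fin m → SimpleGraph (Fin n))
    (H : (Fin m ⊕ Fin m) → SimpleGraph (Fin n ⊕ Bool))
    (hH1 : ∀ i : Fin m, H (Sum.inl i) =
      SimpleGraph.fromRel (fun (a b : Fin n ⊕ Bool) =>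
        (∃ a' b', a = Sum.inl a' ∧ b = Sum.inl b' ∧ (G i).Adj a' b') ∨
        (a = Sum.inr true ∧ b = Sum.inr false)))
    (hH2 : ∀ ℓ : Fin m, H (Sum.inr ℓ) =
      SimpleGraph.fromRel (fun (a b : Fin n ⊕ Bool) =>
        (a = Sum.inr true ∧ b = Sum.inr false) ∨
        (∃ j : Fin n, a = Sum.inl j ∧ (∃ c : Bool, b = Sum.inr c) ∧ (ℓ : ℕ) < k j))) :
    (∃ σ : Fin m → Finset (Fin n),
      (∀ i, ∀ a ∈ σ i, ∀ b ∈ σ i, ¬ (G i).Adj a b) ∧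
      (∀ j : Fin n, k j ≤ (Finset.univ.filter (fun i => j ∈ σ i)).card)) ↔
    (∃ σ' : (Fin m ⊕ Fin m) → Finset (Fin n ⊕ Bool),
      (∀ i, ∀ a ∈ σ' i, ∀ b ∈ σ' i, ¬ (H i).Adj a b) ∧
      (∀ c : Fin n ⊕ Bool,
        m ≤ (Finset.univ.filter (fun i : Fin m ⊕ Fin m => c ∈ σ' i)).card)) := by
  obtain rfl : H = FairSchedule.uniformInstance k G := funext (Sum.rec hH1 hH2)
  exact ⟨FairSchedule.exists_uniform_schedule, FairSchedule.exists_schedule_of_uniform hkm⟩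
end
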